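/- Let l > 0, a ∈ ℝ², and consider the partition of ℝ² into half-open squares {a + l·(i,j) + [0,l)² : (i,j) ∈ ℤ²}. If γ ⊆ ℝ² is a nonempty connected set whose one-dimensional Hausdorff measure satisfies ℋ¹(γ) ≤ l, then γ intersects at most 4 of these squares, i.e., #{(i,j) ∈ ℤ² : γ ∩ (a + l·(i,j) + [0,l)²) ≠ ∅} ≤ 4. -/
import Mathlib


open MeasureTheory

noncomputable section

abbrev E2 : Type := EuclideanSpace ℝ (Fin 2)

/-- The half-open square `a + l·(i,j) + [0,l)²` of the partition of `ℝ²` indexed by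
`(i,j) ∈ ℤ²`. -/
def gridSquare (a : E2) (l : ℝ) (q : ℤ × ℤ) : Set E2 :=
  {x | a 0 + l * q.1 ≤ x 0 ∧ x 0 < a 0 + l * q.1 + l ∧
       a 1 + l * q.2 ≤ x 1 ∧ x 1 < a 1 + l * q.2 + l}

lemma coordLip (i : Fin 2) : LipschitzWith 1 (fun z : E2 => z i) := by
  apply LipschitzWith.of_dist_le_mul
  intro x y
  simp only [NNReal.coe_one, one_mul, Real.dist_eq, EuclideanSpace.dist_eq]
  rw [← Real.sqrt_sq_eq_abs]
  apply Real.sqrt_le_sqrt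
  exact Finset.single_le_sum (f := fun j => dist (x j) (y j) ^ 2)
    (fun j _ => sq_nonneg _) (Finset.mem_univ i) |>.trans_eq' (by rw [Real.dist_eq, sq_abs])

lemma coord_diff_le (l : ℝ) (hl : 0 < l) (γ : Set E2) (hγ : IsConnected γ)
    (hlen : μH[1] γ ≤ ENNReal.ofReal l) (i : Fin 2)
    {x y : E2} (hx : x ∈ γ) (hy : y ∈ γ) : x i - y i ≤ l := by
  rcases le_or_gt (x i) (y i) with h | h
  · linarith
  · have himg : IsPreconnected ((fun z : E2 => z i) '' γ) :=
      (hγ.image _ (coordLip i).continuous.continuousOn).isPreconnected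
    have hsub : Set.Icc (y i) (x i) ⊆ (fun z : E2 => z i) '' γ :=
      himg.Icc_subset ⟨y, hy, rfl⟩ ⟨x, hx, rfl⟩
    have h1 : μH[1] (Set.Icc (y i) (x i)) ≤ μH[1] ((fun z : E2 => z i) '' γ) :=
      measure_mono hsub
    have h2 : μH[1] ((fun z : E2 => z i) '' γ) ≤ μH[1] γ := by
      simpa using (coordLip i).hausdorffMeasure_image_le zero_le_one γ
    have h3 : μH[1] (Set.Icc (y i) (x i)) = ENNReal.ofReal (x i - y i) := by
      rw [hausdorffMeasure_real, Real.volume_Icc]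
    rw [h3] at h1
    have := h1.trans (h2.trans hlen)
    rwa [ENNReal.ofReal_le_ofReal_iff hl.le] at this

/-- **Key counting step of the box-counting lemma.**
A nonempty connected set `γ ⊆ ℝ²` with `ℋ¹(γ) ≤ l` intersects at most `4` of the half-open
squares of side `l` of the partition of `ℝ²` with offset `a`. -/
theorem stmt7 (l : ℝ) (hl : 0 < l) (a : E2) (γ : Set E2)
    (hγ : IsConnected γ)
    (hlen : μH[1] γ ≤ ENNReal.ofReal l) :
    ({q : ℤ × ℤ | (γ ∩ gridSquare a l q).Nonempty}).ncard ≤ 4 := by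
  set S := {q : ℤ × ℤ | (γ ∩ gridSquare a l q).Nonempty} with hS
  rcases Set.eq_empty_or_nonempty S with hE | ⟨q₀, hq₀⟩
  · simp [hE]
  -- pairwise bound on first coordinates
  have key1 : ∀ q ∈ S, ∀ q' ∈ S, q'.1 ≤ q.1 + 1 := by
    rintro q ⟨x, hxγ, hxq⟩ q' ⟨x', hx'γ, hx'q⟩
    have hd : x' 0 - x 0 ≤ l := coord_diff_le l hl γ hγ hlen 0 hx'γ hxγ
    have h1 : a 0 + l * q'.1 ≤ x' 0 := hx'q.1
    have h2 : x 0 < a 0 + l * q.1 + l := hxq.2.1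
    have : (q'.1 : ℝ) < (q.1 : ℝ) + 2 := by nlinarith
    have : q'.1 < q.1 + 2 := by exact_mod_cast this
    omega
  have key2 : ∀ q ∈ S, ∀ q' ∈ S, q'.2 ≤ q.2 + 1 := by
    rintro q ⟨x, hxγ, hxq⟩ q' ⟨x', hx'γ, hx'q⟩
    have hd : x' 1 - x 1 ≤ l := coord_diff_le l hl γ hγ hlen 1 hx'γ hxγ
    have h1 : a 1 + l * q'.2 ≤ x' 1 := hx'q.2.2.1
    have h2 : x 1 < a 1 + l * q.2 + l := hxq.2.2.2
    have : (q'.2 : ℝ) < (q.2 : ℝ) + 2 := by nlinarith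
    have : q'.2 < q.2 + 2 := by exact_mod_cast this
    omega
  -- least first coordinate
  obtain ⟨m1, ⟨p1, hp1, hp1e⟩, hm1⟩ := Int.exists_least_of_bdd
    (P := fun n => ∃ q ∈ S, q.1 = n)
    ⟨q₀.1 - 1, by rintro z ⟨q, hq, rfl⟩; have := key1 q hq q₀ hq₀; omega⟩
    ⟨q₀.1, q₀, hq₀, rfl⟩
  obtain ⟨m2, ⟨p2, hp2, hp2e⟩, hm2⟩ := Int.exists_least_of_bdd
    (P := fun n => ∃ q ∈ S, q.2 = n)
    ⟨q₀.2 - 1, by rintro z ⟨q, hq, rfl⟩; have := key2 q hq q₀ hq₀; omega⟩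
    ⟨q₀.2, q₀, hq₀, rfl⟩
  have hsub : S ⊆ ({(m1, m2), (m1, m2 + 1), (m1 + 1, m2), (m1 + 1, m2 + 1)} : Set (ℤ × ℤ)) := by
    intro q hq
    have h1l : m1 ≤ q.1 := hm1 q.1 ⟨q, hq, rfl⟩
    have h1u : q.1 ≤ m1 + 1 := hp1e ▸ key1 p1 hp1 q hq
    have h2l : m2 ≤ q.2 := hm2 q.2 ⟨q, hq, rfl⟩
    have h2u : q.2 ≤ m2 + 1 := hp2e ▸ key2 p2 hp2 q hq
    obtain ⟨q1, q2⟩ := q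
    simp only [Set.mem_insert_iff, Set.mem_singleton_iff, Prod.mk.injEq] at *
    omega
  calc S.ncard ≤ ({(m1, m2), (m1, m2 + 1), (m1 + 1, m2), (m1 + 1, m2 + 1)} : Set (ℤ × ℤ)).ncard :=
        Set.ncard_le_ncard hsub (Set.toFinite _)
    _ ≤ 4 := by
        apply le_trans (Set.ncard_insert_le _ _)
        have h2 := Set.ncard_insert_le (m1, m2 + 1) ({(m1 + 1, m2), (m1 + 1, m2 + 1)} : Set (ℤ × ℤ))
        have h3 := Set.ncard_insert_le (m1 + 1, m2) ({(m1 + 1, m2 + 1)} : Set (ℤ × ℤ))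
        simp only [Set.ncard_singleton] at h3
        omega
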